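/- Every element x of a reduction's over-ideal is integral over the reduction: if Q ⊆ J are ideals of a commutative ring R with Q·J^r = J^{r+1} for some r > 0, and J is finitely generated, then every element of J is integral over Q. -/

import Mathlib

/-- If `Q ⊆ J` are ideals of a commutative ring `R`, `J` is finitely generated,
and `Q·J^r = J^(r+1)` for some `r > 0`, then every element of `J` is integral over `Q`:
it satisfies a monic equation `x^m + c₁ x^(m-1) + ⋯ + c_m = 0` with `cᵢ ∈ Q^i`. -/
theorem reduction_isIntegral {R : Type*} [CommRing R] (Q J : Ideal R) (hQJ : Q ≤ J)
    (hfg : J.FG) (r : ℕ) (hr : 0 < r) (hred : Q * J ^ r = J ^ (r + 1)) :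
    ∀ x ∈ J, ∃ (m : ℕ) (c : ℕ → R), 0 < m ∧ (∀ i ∈ Finset.Icc 1 m, c i ∈ Q ^ i) ∧
      x ^ m + ∑ i ∈ Finset.Icc 1 m, c i * x ^ (m - i) = 0 := by
  intro x hx
  classical
  haveI : Module.Finite R (J ^ r : Ideal R) := Module.Finite.iff_fg.mpr (Submodule.FG.pow hfg r)
  set f : Module.End R (J ^ r : Ideal R) := algebraMap R _ x with hf
  have hrange : LinearMap.range f ≤ Q • ⊤ := by
    rintro _ ⟨⟨y, hy⟩, rfl⟩
    have h1 : x * y ∈ Q * J ^ r := by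
      rw [hred, pow_succ']
      exact Ideal.mul_mem_mul hx hy
    rw [Submodule.mem_smul_top_iff]
    simpa [f, Algebra.algebraMap_eq_smul_one, smul_eq_mul] using h1
  obtain ⟨p, hmonic, -, hcoeff, haeval⟩ :=
    LinearMap.exists_monic_and_coeff_mem_pow_and_aeval_eq_zero_of_range_le_smul R f Q hrange
  set n := p.natDegree with hn
  have hxr : x ^ r ∈ J ^ r := Ideal.pow_mem_pow hx r
  -- p.eval x * x ^ r = 0
  have key : p.eval x * x ^ r = 0 := by
    have h0 : Polynomial.aeval f p ⟨x ^ r, hxr⟩ = 0 := by rw [haeval]; rfl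
    rw [hf, Polynomial.aeval_algebraMap_apply] at h0
    have := congrArg (Subtype.val) h0
    simpa [Algebra.algebraMap_eq_smul_one, smul_eq_mul, Polynomial.aeval_def,
      Polynomial.eval₂_eq_eval_map, mul_comm] using this
  refine ⟨n + r, fun i => if i ≤ n then p.coeff (n - i) else 0, by omega, ?_, ?_⟩
  · intro i hi
    simp only [Finset.mem_Icc] at hi
    by_cases h : i ≤ n
    · simpa [h, (by omega : n - (n - i) = i)] using hcoeff (n - i)
    · simp [h, zero_mem]
  · have heval : p.eval x = x ^ n + ∑ k ∈ Finset.range n, p.coeff k * x ^ k := by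
      rw [Polynomial.eval_eq_sum_range, Finset.sum_range_succ, hmonic.coeff_natDegree,
        one_mul, add_comm]
    have hsum : ∑ i ∈ Finset.Icc 1 (n + r), (if i ≤ n then p.coeff (n - i) else 0) *
        x ^ (n + r - i) = ∑ k ∈ Finset.range n, p.coeff k * x ^ k * x ^ r := by
      rw [← Finset.sum_subset (Finset.Icc_subset_Icc_right (by omega : n ≤ n + r))
        (fun i hi hni => by
          simp only [Finset.mem_Icc] at hi hni
          have h : ¬ i ≤ n := by omega
          simp [h])]
      rw [Finset.sum_bij' (fun i _ => n - i) (fun k _ => n - k)]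
      · intro i hi
        simp only [Finset.mem_Icc] at hi
        simp only [Finset.mem_range]; omega
      · intro k hk
        simp only [Finset.mem_range] at hk
        exact Finset.mem_Icc.mpr ⟨by omega, by omega⟩
      · intro i hi; simp only [Finset.mem_Icc] at hi; omega
      · intro k hk; simp only [Finset.mem_range] at hk; omega
      · intro i hi
        simp only [Finset.mem_Icc] at hi
        rw [if_pos hi.2, mul_assoc, ← pow_add]
        congr 2
        omega
    rw [hsum, ← Finset.sum_mul, pow_add, ← add_mul]
    have : x ^ n + ∑ k ∈ Finset.range n, p.coeff k * x ^ k = p.eval x := heval.symm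
    rw [this, key]
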